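/- The new quantum Fisher information component for the parameter φ, defined as g₃₃ = tr(ρ·(1/2)(L₃L₃ + L₃L₃)) = tr(ρ·L₃²), equals (9/(16r⁴))·(2r + (1-r²)·log((1-r)/(1+r)))²·sin²θ, for 0 < r < 1. -/

import Mathlib

/-!
`L₃` is a real multiple `c` of an off-diagonal matrix whose square is `sin²θ` times the
identity, so `L₃² = c² sin²θ • 1` is scalar; since `tr ρ = 1`, `tr (ρ L₃²) = c² sin²θ`.
-/

open Real Matrix

noncomputable def rho (r θ φ : ℝ) : Matrix (Fin 2) (Fin 2) ℂ :=
  (1 / 2 : ℂ) •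
    !![(1 + r * Real.cos θ : ℂ), r * Complex.exp (-Complex.I * φ) * Real.sin θ;
       r * Complex.exp (Complex.I * φ) * Real.sin θ, (1 - r * Real.cos θ : ℂ)]

noncomputable def L3 (r θ φ : ℝ) : Matrix (Fin 2) (Fin 2) ℂ :=
  ((3 / (4 * r ^ 2) * (2 * r + (1 - r ^ 2) * Real.log ((1 - r) / (1 + r))) : ℝ) : ℂ) •
    !![0, -Complex.I * Complex.exp (-Complex.I * φ) * Real.sin θ;
       Complex.I * Complex.exp (Complex.I * φ) * Real.sin θ, 0]

theorem Matrix.antidiag_mul_self {R : Type*} [CommRing R] (a b : R) :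
    !![0, a; b, 0] * !![0, a; b, 0] = (a * b) • (1 : Matrix (Fin 2) (Fin 2) R) := by
  rw [Matrix.mul_fin_two, Matrix.one_fin_two, Matrix.smul_of, Matrix.smul_cons]
  ext i j; fin_cases i <;> fin_cases j <;> simp [mul_comm]

theorem trace_rho (r θ φ : ℝ) : (rho r θ φ).trace = 1 := by
  rw [rho, trace_smul, trace_fin_two_of]; ring

noncomputable def l3Coeff (r : ℝ) : ℝ :=
  3 / (4 * r ^ 2) * (2 * r + (1 - r ^ 2) * Real.log ((1 - r) / (1 + r)))

theorem l3Coeff_sq (r : ℝ) :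
    l3Coeff r ^ 2 =
      9 / (16 * r ^ 4) * (2 * r + (1 - r ^ 2) * Real.log ((1 - r) / (1 + r))) ^ 2 := by
  rw [l3Coeff]; ring

theorem L3_antidiag_entries_mul (θ φ : ℝ) :
    (-Complex.I * Complex.exp (-Complex.I * φ) * Real.sin θ) *
      (Complex.I * Complex.exp (Complex.I * φ) * Real.sin θ) =
      ((Real.sin θ ^ 2 : ℝ) : ℂ) := by
  have hphase : Complex.exp (-Complex.I * φ) * Complex.exp (Complex.I * φ) = 1 := by
    rw [← Complex.exp_add, neg_mul, neg_add_cancel, Complex.exp_zero]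
  rw [Complex.ofReal_pow]
  linear_combination (Real.sin θ : ℂ) ^ 2 * hphase -
    (Real.sin θ : ℂ) ^ 2 * Complex.exp (-Complex.I * φ) * Complex.exp (Complex.I * φ) *
      Complex.I_sq

theorem L3_mul_self (r θ φ : ℝ) :
    L3 r θ φ * L3 r θ φ = ((l3Coeff r ^ 2 * Real.sin θ ^ 2 : ℝ) : ℂ) • 1 := by
  rw [L3, ← l3Coeff, smul_mul_smul_comm, Matrix.antidiag_mul_self, L3_antidiag_entries_mul,
    smul_smul, ← Complex.ofReal_mul, ← Complex.ofReal_mul, ← sq]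

theorem g33_formula_general (r θ φ : ℝ) :
    (rho r θ φ * ((1 / 2 : ℂ) • (L3 r θ φ * L3 r θ φ + L3 r θ φ * L3 r θ φ))).trace =
        ((9 / (16 * r ^ 4) * (2 * r + (1 - r ^ 2) * Real.log ((1 - r) / (1 + r))) ^ 2 *
          Real.sin θ ^ 2 : ℝ) : ℂ) ∧
      (rho r θ φ * (L3 r θ φ * L3 r θ φ)).trace =
        ((9 / (16 * r ^ 4) * (2 * r + (1 - r ^ 2) * Real.log ((1 - r) / (1 + r))) ^ 2 *
          Real.sin θ ^ 2 : ℝ) : ℂ) := by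
  have hsymm : (1 / 2 : ℂ) • (L3 r θ φ * L3 r θ φ + L3 r θ φ * L3 r θ φ) =
      L3 r θ φ * L3 r θ φ := by
    rw [← two_smul ℂ, smul_smul]; norm_num
  have htrace : (rho r θ φ * (L3 r θ φ * L3 r θ φ)).trace =
      ((9 / (16 * r ^ 4) * (2 * r + (1 - r ^ 2) * Real.log ((1 - r) / (1 + r))) ^ 2 *
        Real.sin θ ^ 2 : ℝ) : ℂ) := by
    rw [L3_mul_self, Matrix.mul_smul, Matrix.mul_one, trace_smul, trace_rho, smul_eq_mul, mul_one,
      l3Coeff_sq]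
  rw [hsymm]
  exact ⟨htrace, htrace⟩

theorem g33_formula (r θ φ : ℝ) (hr : 0 < r) (hr1 : r < 1) :
    (rho r θ φ * ((1 / 2 : ℂ) • (L3 r θ φ * L3 r θ φ + L3 r θ φ * L3 r θ φ))).trace =
        ((9 / (16 * r ^ 4) * (2 * r + (1 - r ^ 2) * Real.log ((1 - r) / (1 + r))) ^ 2 *
          Real.sin θ ^ 2 : ℝ) : ℂ) ∧
      (rho r θ φ * (L3 r θ φ * L3 r θ φ)).trace =
        ((9 / (16 * r ^ 4) * (2 * r + (1 - r ^ 2) * Real.log ((1 - r) / (1 + r))) ^ 2 *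
          Real.sin θ ^ 2 : ℝ) : ℂ) :=
  g33_formula_general r θ φ
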